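/- arXiv:2512.16165 — 6 statements merged into one kernel-verified Lean document; each statement's English description precedes it below -/
import Mathlib

section
/- Let H[n-1] be the n×(n+2) matrix over K[x_1,…,x_{n+2}] with entries H[n-1]_{i,j} = x_{i+j-1} if i+j-1 ≤ n+2 and 0 otherwise (a degenerate Hankel matrix). For any subset a = {a_1,…,a_{n-2}} of {1,…,n+2}, the 2n×2n matrix L_a whose top n rows are (C_1,…,C_{n+2},0,…,0) and whose bottom n rows are (C_2,…,C_{n+2},0,C_{a_1},…,C_{a_{n-2}}), where C_i denotes the i-th column of H[n-1], has determinant zero. -/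
/-!
For `i < n - 1`, the bottom row `n + i` of `L_a` agrees with the top row `i + 1` on the first
`n + 2` columns: both read `x_{i+2}, …, x_{n+2}, 0, …`, since `H[n-1]` is a Hankel matrix whose
last column `C_{n+2}` is `x_{n+2}` on top and zero below.  The top rows vanish on the last `n - 2`
columns, so these `n - 1` row differences all live in an `(n - 2)`-dimensional space; a linear
relation among them is a nontrivial relation among the rows of `L_a`.
-/

open MvPolynomial

/-- The degenerate Hankel matrix `H[n-1]`: the `n × (n+2)` matrix over
`K[x_1,…,x_{n+2}]` with `(i,j)` entry `x_{i+j-1}` (1-based) if `i+j-1 ≤ n+2`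
and `0` otherwise.  In 0-based indexing, the entry is `X (i+j)` if `i+j < n+2`. -/
noncomputable def degHankel (K : Type*) [Field K] (n : ℕ) :
    Matrix (Fin n) (Fin (n + 2)) (MvPolynomial (Fin (n + 2)) K) :=
  fun i j => if h : i.val + j.val < n + 2 then X (⟨i.val + j.val, h⟩ : Fin (n + 2)) else 0

/-- The `2n × 2n` matrix `L_a` whose top `n` rows are `(C_1, …, C_{n+2}, 0, …, 0)`
and whose bottom `n` rows are `(C_2, …, C_{n+2}, 0, C_{a_1}, …, C_{a_{n-2}})`,
where `C_i` is the `i`-th column of `H[n-1]` and `a = {a_1,…,a_{n-2}} ⊆ {1,…,n+2}`. -/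
noncomputable def Lmat (K : Type*) [Field K] (n : ℕ) (a : Fin (n - 2) → Fin (n + 2)) :
    Matrix (Fin (2 * n)) (Fin (2 * n)) (MvPolynomial (Fin (n + 2)) K) :=
  fun r c =>
    if hr : r.val < n then
      -- top block: columns C_1, …, C_{n+2}, then zeros
      if hc : c.val < n + 2 then degHankel K n ⟨r.val, hr⟩ ⟨c.val, hc⟩ else 0
    else
      -- bottom block: columns C_2, …, C_{n+2}, then 0, then C_{a_1}, …, C_{a_{n-2}}
      if hc : c.val < n + 1 then
        degHankel K n ⟨r.val - n, by have := r.2; omega⟩ ⟨c.val + 1, by omega⟩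
      else if hc2 : c.val = n + 1 then 0
      else degHankel K n ⟨r.val - n, by have := r.2; omega⟩
        (a ⟨c.val - (n + 2), by have := c.2; omega⟩)

open Function

theorem Matrix.det_eq_zero_of_not_linearIndependent_sub_rows {R ι κ : Type*} [CommRing R]
    [IsDomain R] [Fintype ι] [DecidableEq ι] [Fintype κ] (M : Matrix ι ι R) {p q : κ → ι}
    (hp : Injective p) (hpq : ∀ i j, p i ≠ q j)
    (h : ¬ LinearIndependent R fun i ↦ M (p i) - M (q i)) : M.det = 0 := by
  classical
  obtain ⟨g, hg, i₀, hi₀⟩ := Fintype.not_linearIndependent_iff.mp h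
  set v : ι → R := ∑ i, g i • (Pi.single (p i) 1 - Pi.single (q i) 1)
  have hv : ∀ j, v (p j) = g j := by
    intro j
    simp [v, Pi.single_apply, hp.eq_iff, hpq j]
  refine exists_vecMul_eq_zero_iff.mp ⟨v, fun hv0 ↦ hi₀ ?_, ?_⟩
  · rw [← hv, hv0, Pi.zero_apply]
  · simpa [v, sum_vecMul, smul_vecMul, sub_vecMul, single_one_vecMul, row] using hg

section Lmat

variable (K : Type*) [Field K] {n : ℕ} (a : Fin (n - 2) → Fin (n + 2))

/-- The column of `Lmat` holding `C_{a_{k+1}}` in its bottom block. -/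
def extraCol (k : Fin (n - 2)) : Fin (2 * n) := ⟨n + 2 + k, by omega⟩

lemma extraCol_injective : Injective (extraCol (n := n)) := by
  intro k l h; simpa [extraCol, Fin.ext_iff] using h

lemma Lmat_bottom_eq_top_succ (i : Fin (n - 1)) {c : Fin (2 * n)} (hc : c.val < n + 2) :
    Lmat K n a ⟨n + i, by omega⟩ c = Lmat K n a ⟨i + 1, by omega⟩ c := by
  have := i.2
  simp only [Lmat, degHankel]
  split_ifs <;> first | omega | rfl | (congr 1; ext; simp; omega)

lemma Lmat_top_extraCol {r : Fin (2 * n)} (hr : r.val < n) (k : Fin (n - 2)) :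
    Lmat K n a r (extraCol k) = 0 := by
  simp [Lmat, extraCol, hr]

lemma Lmat_bottom_extraCol (i : Fin n) (k : Fin (n - 2)) :
    Lmat K n a ⟨n + i, by omega⟩ (extraCol k) = degHankel K n i (a k) := by
  have hk : (extraCol k).val = n + 2 + k := rfl
  simp only [Lmat]
  rw [dif_neg (by omega), dif_neg (by omega), dif_neg (by omega)]
  congr <;> simp [hk]

lemma Lmat_sub_rows (i : Fin (n - 1)) :
    Lmat K n a ⟨n + i, by omega⟩ - Lmat K n a ⟨i + 1, by omega⟩ =
      ExtendByZero.linearMap _ extraCol (fun k ↦ degHankel K n ⟨i, by omega⟩ (a k)) := by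
  funext c
  simp only [Pi.sub_apply, ExtendByZero.linearMap_apply]
  by_cases hc : c.val < n + 2
  · rw [Lmat_bottom_eq_top_succ K a i hc, sub_self, extend_apply']
    · rfl
    · rintro ⟨k, rfl⟩; simp [extraCol] at hc
  · obtain ⟨k, rfl⟩ : ∃ k, extraCol k = c :=
      ⟨⟨c - (n + 2), by omega⟩, by ext; simp [extraCol]; omega⟩
    have hi : i.val + 1 < n := by omega
    rw [extraCol_injective.extend_apply, Lmat_top_extraCol K a (r := ⟨i + 1, _⟩) hi, sub_zero]
    exact Lmat_bottom_extraCol K a ⟨i, by omega⟩ k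

end Lmat

/-- For any choice of indices `a = {a_1,…,a_{n-2}}` of columns of the degenerate
Hankel matrix `H[n-1]`, the `2n × 2n` matrix `L_a` has determinant zero. -/
theorem stmt1 (K : Type*) [Field K] (n : ℕ) (hn : 2 ≤ n)
    (a : Fin (n - 2) → Fin (n + 2)) :
    (Lmat K n a).det = 0 := by
  refine (Lmat K n a).det_eq_zero_of_not_linearIndependent_sub_rows
    (p := fun i : Fin (n - 1) ↦ ⟨n + i, by omega⟩) (q := fun i ↦ ⟨i + 1, by omega⟩)
    (fun i j h ↦ by simpa [Fin.ext_iff] using h) (fun i j h ↦ by simp [Fin.ext_iff] at h; omega)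
    fun hli ↦ ?_
  simp_rw [Lmat_sub_rows] at hli
  have hcard := (hli.of_comp _).fintype_card_le_finrank
  simp only [Fintype.card_fin, Module.finrank_fintype_fun_eq_card] at hcard
  omega
end

section
/- The Hankel matrix identity: the ideal of n-minors of the (n+1)×(n+1) generic Hankel matrix with the last r antidiagonal variables set to 0 equals the ideal of maximal minors (n-minors) of the n×(n+2) Hankel matrix with the same specialization, i.e. I_n(𝓗_{n+1,n+1}[r]) = I_n(𝓗_{n,n+2}[r]) for all r = 0,…,n−1. -/
open MvPolynomial

/-- The ideal of `t × t` minors of a matrix: generated by determinants of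
submatrices obtained by choosing `t` rows and `t` columns (in increasing order). -/
noncomputable def minorsIdeal {R : Type*} [CommRing R] {l m : ℕ} (t : ℕ)
    (M : Matrix (Fin l) (Fin m) R) : Ideal R :=
  Ideal.span { d : R | ∃ (f : Fin t → Fin l) (g : Fin t → Fin m),
    StrictMono f ∧ StrictMono g ∧ d = (M.submatrix f g).det }

/-- The coordinate section `𝓗_{l,m}[r]` of the generic `l × m` Hankel matrix:
the `(i,j)` entry (1-based) is `x_{i+j-1}` if `i+j-1 ≤ 2n+1-r`, and `0` otherwise,
over `S = K[x_1, …, x_{2n+1-r}]`. -/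
noncomputable def hankelSection (K : Type*) [Field K] (n r l m : ℕ) :
    Matrix (Fin l) (Fin m) (MvPolynomial (Fin (2 * n + 1 - r)) K) :=
  fun i j => if h : i.val + j.val < 2 * n + 1 - r
    then X (⟨i.val + j.val, h⟩ : Fin (2 * n + 1 - r)) else 0


/-!
The identity holds for the Hankel matrix `(y (i + j))` of an arbitrary sequence `y`; the
section `𝓗[r]` is the case `y = (x_0, …, x_{2n-r}, 0, 0, …)`. Write `D(ρ, c) = det (y (ρ k + c l))`.
Expanding both sides by Leibniz and transporting the shift pattern along the permutation shows
that the sum of `D` over all ways of raising `w` rows by one equals the sum over all ways of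
raising `w` columns by one.

An `n`-minor of the square matrix uses rows `0, …, n - 1` with an upper set of them raised, and
every other row pattern of that size repeats a row, so the minor equals a sum over column
patterns, each term of which vanishes or is a maximal minor of the `n × (n + 2)` matrix.
Conversely, the columns `g` of a maximal minor of the `n × (n + 2)` matrix are `c` raised on an
upper set `P`, where `c` omits a single value of `0, …, n`. The row side of the identity is a sum
of minors of the square matrix, and among the column patterns of size `#P` the upper set `P`
uniquely maximises `∑ l ∈ E, l`; so the remaining column terms have smaller weight `∑ l * g l`
and induction on the weight concludes.
-/
open Finset Function

section ShiftIdentity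

variable {R : Type*} [CommRing R]

def hankelMatrix {ι κ : Type*} (y : ℕ → R) (ρ : ι → ℕ) (c : κ → ℕ) : Matrix ι κ R :=
  Matrix.of fun i j => y (ρ i + c j)

def shiftAt {ι : Type*} [DecidableEq ι] (d : ι → ℕ) (E : Finset ι) (i : ι) : ℕ :=
  d i + if i ∈ E then 1 else 0

variable {ι : Type*} [Fintype ι] [DecidableEq ι]

lemma det_hankelMatrix_eq_zero_of_not_injective_left (y : ℕ → R) {ρ : ι → ℕ} (c : ι → ℕ)
    (hρ : ¬Injective ρ) : (hankelMatrix y ρ c).det = 0 := by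
  obtain ⟨i, j, hij, hne⟩ : ∃ i j, ρ i = ρ j ∧ i ≠ j := by simpa [Injective] using hρ
  exact Matrix.det_zero_of_row_eq hne (funext fun k => by simp [hankelMatrix, hij])

lemma det_hankelMatrix_eq_zero_of_not_injective_right (y : ℕ → R) (ρ : ι → ℕ) {c : ι → ℕ}
    (hc : ¬Injective c) : (hankelMatrix y ρ c).det = 0 := by
  obtain ⟨i, j, hij, hne⟩ : ∃ i j, c i = c j ∧ i ≠ j := by simpa [Injective] using hc
  exact Matrix.det_zero_of_column_eq hne fun k => by simp [hankelMatrix, hij]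

theorem sum_det_hankelMatrix_shiftAt_left (y : ℕ → R) (ρ c : ι → ℕ) (w : ℕ) :
    ∑ E ∈ powersetCard w univ, (hankelMatrix y (shiftAt ρ E) c).det
      = ∑ E ∈ powersetCard w univ, (hankelMatrix y ρ (shiftAt c E)).det := by
  simp only [Matrix.det_apply, hankelMatrix, Matrix.of_apply]
  rw [sum_comm, sum_comm (s := powersetCard w univ)]
  refine sum_congr rfl fun σ _ => ?_
  rw [← smul_sum, ← smul_sum]
  congr 1
  have hperm : powersetCard w (univ : Finset ι)
      = (powersetCard w univ).map (mapEmbedding σ.toEmbedding).toEmbedding := by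
    rw [← powersetCard_map, map_univ_equiv]
  conv_lhs => rw [hperm, sum_map]
  refine sum_congr rfl fun E _ => prod_congr rfl fun i _ => ?_
  simp only [shiftAt, RelEmbedding.coe_toEmbedding, mapEmbedding_apply, mem_map_equiv,
    Equiv.symm_apply_apply]
  rw [add_right_comm, add_assoc]

lemma sum_mul_shiftAt {κ : Type*} [Fintype κ] [DecidableEq κ] (w c : κ → ℕ) (E : Finset κ) :
    ∑ l, w l * shiftAt c E l = ∑ l, w l * c l + ∑ l ∈ E, w l := by
  simp only [shiftAt, mul_add, mul_ite, mul_one, mul_zero, sum_add_distrib, sum_ite_mem,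
    univ_inter]

end ShiftIdentity

section FinOrder

variable {n : ℕ}

lemma StrictMono.apply_add_le_apply_add {g : Fin n → ℕ} (hg : StrictMono g) {i j : Fin n}
    (hij : i ≤ j) : g i + j ≤ g j + i := by
  have := card_le_card_of_injOn g (s := Icc i j) (t := Icc (g i) (g j))
    (fun k hk => by
      simp only [coe_Icc, Set.mem_Icc] at hk ⊢
      exact ⟨hg.monotone hk.1, hg.monotone hk.2⟩)
    hg.injective.injOn
  simp only [Fin.card_Icc, Nat.card_Icc] at this
  have := hg.monotone hij
  omega

lemma StrictMono.val_le_apply {g : Fin n → ℕ} (hg : StrictMono g) (l : Fin n) : l.val ≤ g l := by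
  have : g ⟨0, l.pos⟩ + l ≤ g l + 0 := hg.apply_add_le_apply_add (Fin.le_def.2 (Nat.zero_le _))
  omega

lemma StrictMono.apply_add_le_add_of_forall_lt {g : Fin n → ℕ} {m : ℕ} (hg : StrictMono g)
    (hgm : ∀ l, g l < m) (l : Fin n) : g l + n ≤ l + m := by
  have hl := l.isLt
  have : g l + (n - 1) ≤ g ⟨n - 1, by omega⟩ + l :=
    hg.apply_add_le_apply_add (j := ⟨n - 1, by omega⟩) (Fin.le_def.2 (Nat.le_sub_one_of_lt hl))
  have := hgm ⟨n - 1, by omega⟩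
  omega

lemma isUpperSet_filter_add_lt {g : Fin n → ℕ} (hg : StrictMono g) (k : ℕ) :
    IsUpperSet (({l | l.val + k < g l} : Finset (Fin n)) : Set (Fin n)) := by
  intro i j hij hi
  simp only [coe_filter_univ, Set.mem_ofPred_eq] at hi ⊢
  have := hg.apply_add_le_apply_add hij
  omega

lemma StrictMono.shiftAt_val_eq {g : Fin n → ℕ} (hg : StrictMono g) (hgn : ∀ l, g l < n + 1) :
    shiftAt Fin.val {l | l.val < g l} = g := funext fun l => by
  have := hg.val_le_apply l
  have := hg.apply_add_le_add_of_forall_lt hgn l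
  simp only [shiftAt, mem_filter, mem_univ, true_and]
  split_ifs <;> omega

lemma StrictMono.shiftAt_shiftAt_val_eq {g : Fin n → ℕ} (hg : StrictMono g)
    (hgn : ∀ l, g l < n + 2) :
    shiftAt (shiftAt Fin.val {l | l.val + 1 < g l}) {l | l.val < g l} = g := funext fun l => by
  have := hg.val_le_apply l
  have := hg.apply_add_le_add_of_forall_lt hgn l
  simp only [shiftAt, mem_filter, mem_univ, true_and]
  split_ifs <;> omega

lemma StrictMono.monotone_shiftAt {κ : Type*} [PartialOrder κ] [DecidableEq κ] {d : κ → ℕ}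
    (hd : StrictMono d) (E : Finset κ) : Monotone (shiftAt d E) := by
  intro i j hij
  rcases hij.eq_or_lt with rfl | hlt
  · rfl
  · have := hd hlt
    simp only [shiftAt]
    split_ifs <;> omega

lemma strictMono_shiftAt_val_iff {E : Finset (Fin n)} :
    StrictMono (shiftAt Fin.val E) ↔ IsUpperSet (E : Set (Fin n)) := by
  refine ⟨fun h i j hij hi => ?_, fun hE i j hij => ?_⟩
  · by_contra hj
    have := h.apply_add_le_apply_add hij
    simp only [shiftAt, mem_coe] at hi hj this
    simp only [hi, hj, if_true, if_false] at this
    omega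
  · have hij' : i.val < j.val := hij
    simp only [shiftAt]
    by_cases hj : j ∈ E
    · simp only [hj, if_true]
      split_ifs <;> omega
    · have hi : i ∉ E := fun hi => hj (hE hij.le hi)
      simp only [hi, hj, if_false]
      omega

lemma sum_lt_sum_of_isUpperSet {κ : Type*} [LinearOrder κ] [DecidableEq κ] {f : κ → ℕ}
    (hf : StrictMono f) {E E' : Finset κ} (hE : IsUpperSet (E : Set κ)) (hcard : #E' = #E)
    (hne : E' ≠ E) : ∑ l ∈ E', f l < ∑ l ∈ E, f l := by
  have hlt : ∀ a ∈ E' \ E, ∀ b ∈ E \ E', f a < f b := fun a ha b hb => by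
    rw [mem_sdiff] at ha hb
    exact hf (lt_of_not_ge fun hba => ha.2 (hE hba hb.1))
  have hsd : #(E' \ E) = #(E \ E') := card_sdiff_comm hcard
  have hnonempty : (E \ E').Nonempty :=
    sdiff_nonempty.2 fun hsub => hne (eq_of_subset_of_card_le hsub hcard.le).symm
  obtain ⟨b, hb, hmin⟩ := (E \ E').exists_min_image f hnonempty
  have hsmall : ∑ l ∈ E' \ E, f l < #(E' \ E) • f b := by
    rw [← sum_const]
    exact sum_lt_sum_of_nonempty (card_pos.1 (hsd ▸ card_pos.2 hnonempty)) fun a ha => hlt a ha b hb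
  have hlarge : #(E \ E') • f b ≤ ∑ l ∈ E \ E', f l := card_nsmul_le_sum _ _ _ hmin
  rw [hsd] at hsmall
  rw [← sum_inter_add_sum_sdiff E' E, ← sum_inter_add_sum_sdiff E E', inter_comm]
  omega

end FinOrder

section HankelMinors

variable {R : Type*} [CommRing R] (y : ℕ → R)

lemma det_hankelMatrix_mem_minorsIdeal {t l m : ℕ} {ρ c : Fin t → ℕ} (hρ : Monotone ρ)
    (hc : Monotone c) (hρl : ∀ k, ρ k < l) (hcm : ∀ k, c k < m) :
    (hankelMatrix y ρ c).det
      ∈ minorsIdeal t (hankelMatrix y Fin.val Fin.val : Matrix (Fin l) (Fin m) R) := by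
  by_cases hρi : Injective ρ
  · by_cases hci : Injective c
    · exact Ideal.subset_span ⟨fun k => ⟨ρ k, hρl k⟩, fun k => ⟨c k, hcm k⟩,
        fun _ _ h => hρ.strictMono_of_injective hρi h,
        fun _ _ h => hc.strictMono_of_injective hci h, rfl⟩
    · rw [det_hankelMatrix_eq_zero_of_not_injective_right y ρ hci]
      exact zero_mem _
  · rw [det_hankelMatrix_eq_zero_of_not_injective_left y c hρi]
    exact zero_mem _

-- Any other row pattern of the same size is not an upper set, so it repeats a row.
lemma sum_det_hankelMatrix_shiftAt_val {n : ℕ} (c : Fin n → ℕ) {E : Finset (Fin n)}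
    (hE : IsUpperSet (E : Set (Fin n))) :
    ∑ E' ∈ powersetCard #E univ, (hankelMatrix y (shiftAt Fin.val E') c).det
      = (hankelMatrix y (shiftAt Fin.val E) c).det := by
  refine sum_eq_single_of_mem E (mem_powersetCard.2 ⟨subset_univ _, rfl⟩) fun E' hE' hne => ?_
  refine det_hankelMatrix_eq_zero_of_not_injective_left y c fun hinj => ?_
  have hE'up : IsUpperSet (E' : Set (Fin n)) := strictMono_shiftAt_val_iff.1
    ((Fin.val_strictMono.monotone_shiftAt E').strictMono_of_injective hinj)
  have hcard := (mem_powersetCard.1 hE').2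
  exact (sum_lt_sum_of_isUpperSet Fin.val_strictMono hE hcard hne).not_gt
    (sum_lt_sum_of_isUpperSet Fin.val_strictMono hE'up hcard.symm hne.symm)

theorem minorsIdeal_hankelMatrix_square_le (n : ℕ) :
    minorsIdeal n (hankelMatrix y Fin.val Fin.val : Matrix (Fin (n + 1)) (Fin (n + 1)) R)
      ≤ minorsIdeal n (hankelMatrix y Fin.val Fin.val : Matrix (Fin n) (Fin (n + 2)) R) := by
  refine Ideal.span_le.2 ?_
  rintro _ ⟨f, g, hf, hg, rfl⟩
  have hf' : StrictMono (Fin.val ∘ f) := Fin.val_strictMono.comp hf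
  have hg' : StrictMono (Fin.val ∘ g) := Fin.val_strictMono.comp hg
  have hE : IsUpperSet (({l | l.val < (Fin.val ∘ f) l} : Finset (Fin n)) : Set (Fin n)) := by
    simpa only [add_zero] using isUpperSet_filter_add_lt hf' 0
  change (hankelMatrix y (Fin.val ∘ f) (Fin.val ∘ g)).det ∈ _
  rw [← hf'.shiftAt_val_eq fun l => (f l).isLt, ← sum_det_hankelMatrix_shiftAt_val y _ hE,
    sum_det_hankelMatrix_shiftAt_left]
  refine sum_mem fun E' _ => det_hankelMatrix_mem_minorsIdeal y Fin.val_strictMono.monotone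
    (hg'.monotone_shiftAt E') Fin.isLt fun l => ?_
  have := (g l).isLt
  simp only [shiftAt, Function.comp_apply]
  split_ifs <;> omega

theorem det_hankelMatrix_val_mem_minorsIdeal_square {n : ℕ} (g : Fin n → ℕ) (hg : StrictMono g)
    (hgn : ∀ l, g l < n + 2) :
    (hankelMatrix y Fin.val g).det
      ∈ minorsIdeal n (hankelMatrix y Fin.val Fin.val : Matrix (Fin (n + 1)) (Fin (n + 1)) R) := by
  induction hN : ∑ l : Fin n, l.val * g l using Nat.strong_induction_on generalizing g with
  | _ N ih =>
  set Q : Finset (Fin n) := {l | l.val + 1 < g l}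
  set P : Finset (Fin n) := {l | l.val < g l}
  have hP : IsUpperSet (P : Set (Fin n)) := by
    simpa only [add_zero] using isUpperSet_filter_add_lt hg 0
  have hc : StrictMono (shiftAt Fin.val Q) :=
    strictMono_shiftAt_val_iff.2 (isUpperSet_filter_add_lt hg 1)
  have hgP : shiftAt (shiftAt Fin.val Q) P = g := hg.shiftAt_shiftAt_val_eq hgn
  have hcn : ∀ l, shiftAt Fin.val Q l < n + 1 := fun l => by
    have := l.isLt
    have := hg.apply_add_le_add_of_forall_lt hgn l
    simp only [shiftAt, Q, mem_filter, mem_univ, true_and]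
    split_ifs <;> omega
  have hdet : (hankelMatrix y Fin.val g).det
      = ∑ E ∈ powersetCard #P univ, (hankelMatrix y (shiftAt Fin.val E) (shiftAt Fin.val Q)).det
        - ∑ E ∈ (powersetCard #P univ).erase P,
            (hankelMatrix y Fin.val (shiftAt (shiftAt Fin.val Q) E)).det := by
    rw [sum_det_hankelMatrix_shiftAt_left,
      ← add_sum_erase _ _ (mem_powersetCard.2 ⟨subset_univ P, rfl⟩), hgP, add_sub_cancel_right]
  rw [hdet]
  refine sub_mem (sum_mem fun E _ => det_hankelMatrix_mem_minorsIdeal y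
    (Fin.val_strictMono.monotone_shiftAt E) hc.monotone (fun l => ?_) hcn) (sum_mem fun E hE => ?_)
  · have := l.isLt
    simp only [shiftAt]
    split_ifs <;> omega
  obtain ⟨hEP, hE⟩ := mem_erase.1 hE
  by_cases hinj : Injective (shiftAt (shiftAt Fin.val Q) E)
  · refine ih _ ?_ _ ((hc.monotone_shiftAt E).strictMono_of_injective hinj) (fun l => ?_) rfl
    · rw [← hN, ← hgP, sum_mul_shiftAt _ _ E, sum_mul_shiftAt _ _ P]
      exact Nat.add_lt_add_left
        (sum_lt_sum_of_isUpperSet Fin.val_strictMono hP (mem_powersetCard.1 hE).2 hEP) _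
    · have := hcn l
      simp only [shiftAt] at this ⊢
      split_ifs <;> omega
  · rw [det_hankelMatrix_eq_zero_of_not_injective_right y _ hinj]
    exact zero_mem _

theorem minorsIdeal_hankelMatrix_square_eq (n : ℕ) :
    minorsIdeal n (hankelMatrix y Fin.val Fin.val : Matrix (Fin (n + 1)) (Fin (n + 1)) R)
      = minorsIdeal n (hankelMatrix y Fin.val Fin.val : Matrix (Fin n) (Fin (n + 2)) R) := by
  refine le_antisymm (minorsIdeal_hankelMatrix_square_le y n) (Ideal.span_le.2 ?_)
  rintro _ ⟨f, g, hf, hg, rfl⟩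
  obtain rfl : f = id := hf.eq_id
  exact det_hankelMatrix_val_mem_minorsIdeal_square y _ (Fin.val_strictMono.comp hg)
    fun l => (g l).isLt

end HankelMinors

lemma hankelSection_eq_hankelMatrix (K : Type*) [Field K] (n r l m : ℕ) :
    hankelSection K n r l m
      = hankelMatrix (fun k => if h : k < 2 * n + 1 - r then X ⟨k, h⟩ else 0) Fin.val Fin.val :=
  rfl

theorem stmt2_general (K : Type*) [Field K] (n r : ℕ) :
    minorsIdeal n (hankelSection K n r (n + 1) (n + 1))
      = minorsIdeal n (hankelSection K n r n (n + 2)) := by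
  rw [hankelSection_eq_hankelMatrix, hankelSection_eq_hankelMatrix]
  exact minorsIdeal_hankelMatrix_square_eq _ n

/-- `I_n(𝓗_{n+1,n+1}[r]) = I_n(𝓗_{n,n+2}[r])` for all `r = 0, …, n-1`:
the ideal of `n`-minors of the degenerated `(n+1) × (n+1)` Hankel matrix equals
the ideal of maximal minors of the degenerated `n × (n+2)` Hankel matrix. -/
theorem stmt2 (K : Type*) [Field K] (n r : ℕ) (hn : 1 ≤ n) (hr : r < n) :
    minorsIdeal n (hankelSection K n r (n + 1) (n + 1))
      = minorsIdeal n (hankelSection K n r n (n + 2)) :=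
  stmt2_general K n r
end

section
/- For an n×(n+2) matrix M over a commutative ring, a subset I of column indices with |I| = n−2, and four remaining distinct indices a < b < c < d, the three-term Plücker relation holds among the maximal minors: [I∪{a,b}][I∪{c,d}] − [I∪{a,c}][I∪{b,d}] + [I∪{a,d}][I∪{b,c}] = 0. -/
/-!
For any linear functional `f` on the column space, stacking the row `(f(vⱼ))ⱼ` on top of an
`n × (n+1)` matrix with columns `vⱼ` gives a square matrix whose first row is a combination of the
others; its Laplace expansion along that row is the identity `∑ⱼ (-1)ʲ f(vⱼ) [v without vⱼ] = 0`.
With columns `b, c, d, I` and `f = [a, ·, I]`, every term with `vⱼ ∈ I` has a repeated column, and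
the three remaining terms are the Plücker relation, with the columns listed as `x, y, I`.
Sorting them into increasing order multiplies `[I ∪ {x, y}]` by `ε(x) ε(y)`, where
`ε(z) = (-1) ^ #{i ∈ I | i < z}`, and these signs factor out of the relation.
-/

/-- The maximal minor of an `n × (n+2)` matrix `M` on a set `J` of `n` columns,
taken in increasing order (junk value `0` if `J` does not have `n` elements). -/
noncomputable def maxMinor {R : Type*} [CommRing R] {n : ℕ}
    (M : Matrix (Fin n) (Fin (n + 2)) R) (J : Finset (Fin (n + 2))) : R :=
  if h : J.card = n then (M.submatrix id (J.orderEmbOfFin h)).det else 0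

open Finset Matrix

namespace Finset

variable {α : Type*} [LinearOrder α]

theorem orderEmbOfFin_lt_iff (s : Finset α) {k : ℕ} (h : s.card = k) (i : Fin k) (y : α) :
    s.orderEmbOfFin h i < y ↔ (i : ℕ) < #{x ∈ s | x < y} := by
  set e := s.orderEmbOfFin h
  constructor
  · intro hi
    have hsub : (Iic i).map e.toEmbedding ⊆ {x ∈ s | x < y} := by
      simp only [subset_iff, mem_map, mem_Iic, mem_filter]
      rintro _ ⟨j, hj, rfl⟩
      exact ⟨s.orderEmbOfFin_mem h j, (e.monotone hj).trans_lt hi⟩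
    simpa using card_le_card hsub
  · contrapose!
    intro hi
    have hsub : {x ∈ s | x < y} ⊆ (Iio i).map e.toEmbedding := by
      simp only [subset_iff, mem_map, mem_Iio, mem_filter]
      rintro x ⟨hx, hxy⟩
      obtain ⟨j, rfl⟩ : x ∈ Set.range e := by rwa [s.range_orderEmbOfFin h]
      exact ⟨j, e.lt_iff_lt.mp (hxy.trans_le hi), rfl⟩
    simpa using card_le_card hsub

theorem orderEmbOfFin_insert {s : Finset α} {k : ℕ} (h : s.card = k) {y : α} (hy : y ∉ s)
    (h' : (insert y s).card = k + 1) (q : Fin (k + 1)) (hq : (q : ℕ) = #{x ∈ s | x < y}) :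
    ⇑((insert y s).orderEmbOfFin h') = Fin.insertNth q y (s.orderEmbOfFin h) := by
  refine (orderEmbOfFin_unique h' (fun i => ?_) ?_).symm
  · cases i using Fin.succAboveCases q with
    | x => simp
    | p i => simp [orderEmbOfFin_mem]
  · refine (Fin.strictMono_insertNth_iff _ _ _).2 ⟨(s.orderEmbOfFin h).strictMono, ?_, ?_⟩
    · intro i hi
      rwa [orderEmbOfFin_lt_iff, ← hq]
    · intro i hi
      have hle : y ≤ s.orderEmbOfFin h i := by
        rwa [← not_lt, orderEmbOfFin_lt_iff, ← hq, not_lt]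
      exact hle.lt_of_ne fun hyi => hy (hyi ▸ orderEmbOfFin_mem s h i)

end Finset

namespace Matrix

variable {R ι : Type*} [CommRing R]

theorem updateCol_submatrix_id_col {α m κ : Type*} [DecidableEq κ] (M : Matrix m ι α)
    (u : κ → ι) (j : κ) (z : ι) :
    (M.submatrix id u).updateCol j (fun i => M i z) = M.submatrix id (Function.update u j z) := by
  ext i l
  by_cases h : l = j
  · subst h; simp
  · simp [h]

theorem det_submatrix_insertNth {k : ℕ} (M : Matrix (Fin (k + 1)) ι R) (j : Fin (k + 1)) (y : ι)
    (g : Fin k → ι) :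
    (M.submatrix id (Fin.insertNth j y g)).det =
      (-1) ^ (j : ℕ) * (M.submatrix id (Fin.cons y g)).det := by
  rw [det_succ_column _ j, det_succ_column_zero, Finset.mul_sum]
  refine Finset.sum_congr rfl fun i _ => ?_
  simp only [submatrix_apply, id_eq, Fin.insertNth_apply_same, submatrix_submatrix,
    Fin.insertNth_comp_succAbove, Fin.cons_zero, Fin.cons_comp_succ, pow_add]
  ring

theorem det_submatrix_cons_insertNth {k : ℕ} (M : Matrix (Fin (k + 2)) ι R) (j : Fin (k + 1))
    (x y : ι) (g : Fin k → ι) :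
    (M.submatrix id (Fin.cons x (Fin.insertNth j y g))).det =
      (-1) ^ (j : ℕ) * (M.submatrix id (Fin.cons x (Fin.cons y g))).det := by
  have hswap : (Fin.cons y (Fin.cons x g) : Fin (k + 2) → ι) = Fin.insertNth 1 x (Fin.cons y g) := by
    rw [← Fin.succ_zero_eq_one, Fin.insertNth_succ_cons, Fin.insertNth_zero']
  rw [← Fin.insertNth_succ_cons, det_submatrix_insertNth, hswap, det_submatrix_insertNth]
  simp [pow_succ]

theorem sum_neg_one_pow_mul_map_col_mul_det_submatrix_succAbove {k : ℕ}
    (f : (Fin (k + 1) → R) →ₗ[R] R) (M : Matrix (Fin (k + 1)) (Fin (k + 2)) R) :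
    ∑ j : Fin (k + 2), (-1) ^ (j : ℕ) * f (fun i => M i j) * (M.submatrix id j.succAbove).det = 0 := by
  let B : Matrix (Fin (k + 2)) (Fin (k + 2)) R :=
    of fun i j => vecCons (f fun i => M i j) (fun i => M i j) i
  let c : Fin (k + 2) → R := vecCons 0 fun i => f fun j => if i = j then 1 else 0
  have hrow : ∑ i, c i • B i = B 0 := by
    ext j
    have hB0 : B 0 j = ∑ i, M i j * f fun j => if i = j then 1 else 0 :=
      LinearMap.pi_apply_eq_sum_univ f _
    rw [hB0, Fin.sum_univ_succ]
    simp [B, c, mul_comm]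
  have hB : B.det = 0 := by
    have := det_updateRow_sum B 0 c
    rwa [hrow, updateRow_eq_self, show c 0 = 0 from rfl, zero_smul] at this
  rwa [det_succ_row_zero] at hB

theorem plucker_relation_submatrix_cons {m : ℕ} (M : Matrix (Fin (m + 2)) ι R) (a b c d : ι)
    (e : Fin m → ι) :
    (M.submatrix id (Fin.cons a (Fin.cons b e))).det * (M.submatrix id (Fin.cons c (Fin.cons d e))).det
      - (M.submatrix id (Fin.cons a (Fin.cons c e))).det *
          (M.submatrix id (Fin.cons b (Fin.cons d e))).det
      + (M.submatrix id (Fin.cons a (Fin.cons d e))).det *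
          (M.submatrix id (Fin.cons b (Fin.cons c e))).det = 0 := by
  let f : (Fin (m + 2) → R) →ₗ[R] R :=
    (LinearMap.proj 1).comp (cramer (M.submatrix id (Fin.cons a (Fin.cons a e))))
  have hf : ∀ z, f (fun i => M i z) = (M.submatrix id (Fin.cons a (Fin.cons z e))).det := by
    intro z
    have hupdate : Function.update (Fin.cons a (Fin.cons a e) : Fin (m + 2) → ι) 1 z =
        Fin.cons a (Fin.cons z e) := by
      rw [← Fin.succ_zero_eq_one, ← Fin.cons_update, Fin.update_cons_zero]
    simp only [f, LinearMap.comp_apply, LinearMap.proj_apply, cramer_apply,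
      updateCol_submatrix_id_col, hupdate]
  have hrepeated : ∀ l, (M.submatrix id (Fin.cons a (Fin.cons (e l) e))).det = 0 := fun l =>
    det_zero_of_column_eq (i := 1) (j := l.succ.succ) (by simp [Fin.ext_iff]) fun _ => rfl
  have hremove : Fin.removeNth 1 (Fin.cons c (Fin.cons d e) : Fin (m + 2) → ι) = Fin.cons c e := by
    ext l
    cases l using Fin.cases <;> rfl
  have hsum := sum_neg_one_pow_mul_map_col_mul_det_submatrix_succAbove f
    (M.submatrix id (Fin.cons b (Fin.cons c (Fin.cons d e))))
  simpa [Fin.sum_univ_succ, hf, hrepeated, hremove, sub_eq_add_neg, add_assoc] using hsum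

end Matrix

theorem maxMinor_insert_insert {R : Type*} [CommRing R] {m : ℕ}
    (M : Matrix (Fin (m + 2)) (Fin (m + 2 + 2)) R) {I : Finset (Fin (m + 2 + 2))}
    (hI : I.card = m) {x y : Fin (m + 2 + 2)} (hx : x ∉ I) (hy : y ∉ I) (hxy : x < y) :
    maxMinor M (insert x (insert y I)) = (-1) ^ (#{z ∈ I | z < x} + #{z ∈ I | z < y}) *
      (M.submatrix id (Fin.cons x (Fin.cons y (I.orderEmbOfFin hI)))).det := by
  have hxJ : x ∉ insert y I := by simp [hxy.ne, hx]
  have hJ' : (insert y I).card = m + 1 := by rw [card_insert_of_notMem hy, hI]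
  have hJ : (insert x (insert y I)).card = m + 2 := by rw [card_insert_of_notMem hxJ, hJ']
  have hcount : ∀ z, #{w ∈ I | w < z} ≤ m := fun z => (card_filter_le I _).trans hI.le
  rw [maxMinor, dif_pos hJ,
    orderEmbOfFin_insert hJ' hxJ hJ ⟨#{z ∈ I | z < x}, by grind⟩
      (by rw [filter_insert, if_neg hxy.not_gt]),
    det_submatrix_insertNth,
    orderEmbOfFin_insert hI hy hJ' ⟨#{z ∈ I | z < y}, by grind⟩ rfl,
    det_submatrix_cons_insertNth, pow_add, mul_assoc]

/-- The three-term Plücker relation among maximal minors of an `n × (n+2)` matrix: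
for a set `I` of `n−2` column indices and remaining distinct indices `a < b < c < d`,
`[I∪{a,b}][I∪{c,d}] − [I∪{a,c}][I∪{b,d}] + [I∪{a,d}][I∪{b,c}] = 0`. -/
theorem stmt4 {R : Type*} [CommRing R] (n : ℕ) (hn : 2 ≤ n)
    (M : Matrix (Fin n) (Fin (n + 2)) R)
    (I : Finset (Fin (n + 2))) (hI : I.card = n - 2)
    (a b c d : Fin (n + 2))
    (ha : a ∉ I) (hb : b ∉ I) (hc : c ∉ I) (hd : d ∉ I)
    (hab : a < b) (hbc : b < c) (hcd : c < d) :
    maxMinor M (insert a (insert b I)) * maxMinor M (insert c (insert d I))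
      - maxMinor M (insert a (insert c I)) * maxMinor M (insert b (insert d I))
      + maxMinor M (insert a (insert d I)) * maxMinor M (insert b (insert c I)) = 0 := by
  obtain ⟨m, rfl⟩ : ∃ m, n = m + 2 := ⟨n - 2, by omega⟩
  replace hI : I.card = m := hI
  let ε : Fin (m + 2 + 2) → R := fun z => (-1) ^ #{w ∈ I | w < z}
  rw [maxMinor_insert_insert M hI ha hb hab, maxMinor_insert_insert M hI hc hd hcd,
    maxMinor_insert_insert M hI ha hc (hab.trans hbc),
    maxMinor_insert_insert M hI hb hd (hbc.trans hcd),
    maxMinor_insert_insert M hI ha hd (hab.trans (hbc.trans hcd)),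
    maxMinor_insert_insert M hI hb hc hbc]
  linear_combination (ε a * ε b * ε c * ε d) *
    plucker_relation_submatrix_cons M a b c d (I.orderEmbOfFin hI)
end

section
/- Generalized Laplace expansion: for a 2n×2n matrix M over a commutative ring, det(M) = Σ_{Λ ⊂ [2n], |Λ| = n} ε(Λ) · det(M_{bottom, Λ}) · det(M_{top, Λ^c}), where M_{bottom,Λ} is the submatrix on rows n+1,…,2n and columns Λ, M_{top,Λ^c} is the submatrix on rows 1,…,n and the complementary columns, and ε(Λ) = (−1)^{Σ_{λ∈Λ} λ + n(3n+1)/2}. -/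
/-- The `n × n` minor of a `2n × 2n` matrix `M` on the rows given by `rows` and the
columns of the set `Λ` taken in increasing order (junk value `0` if `Λ.card ≠ n`). -/
noncomputable def blockMinor {R : Type*} [CommRing R] {n : ℕ}
    (M : Matrix (Fin (2 * n)) (Fin (2 * n)) R)
    (rows : Fin n → Fin (2 * n)) (Λ : Finset (Fin (2 * n))) : R :=
  if h : Λ.card = n then (M.submatrix rows (Λ.orderEmbOfFin h)).det else 0

/-!
Expand `det M = ∑ π, sign π * ∏ j, M (π j) j`. A permutation `π` of `Fin (2 * n)` is determined
by the set `Λ` of columns it sends to the bottom rows, together with two permutations `σ, τ` of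
`Fin n` matching the increasing enumerations of `Λ` and `Λᶜ` with the bottom and the top rows.
For `π = laplacePerm Λ σ τ` the product splits into a term of each minor, and
`sign π = sign σ * sign τ * sign (laplacePerm Λ 1 1)`. The inversions of the shuffle
`laplacePerm Λ 1 1` are the pairs `x < y` with `x ∈ Λ`, `y ∉ Λ`; there are
`n² + n(n-1)/2 - ∑ λ` of them, which has the parity of the exponent of `ε(Λ)`.
-/

open Finset Equiv Equiv.Perm

theorem Finset.strictMonoOn_of_strictMono_comp_orderEmbOfFin {α β : Type*} [LinearOrder α]
    [Preorder β] {f : α → β} {t : Finset α} {k : ℕ} (ht : #t = k)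
    (h : StrictMono (f ∘ t.orderEmbOfFin ht)) : StrictMonoOn f t := by
  intro x hx y hy hxy
  obtain ⟨i, rfl⟩ : x ∈ Set.range (t.orderEmbOfFin ht) := by simpa using hx
  obtain ⟨j, rfl⟩ : y ∈ Set.range (t.orderEmbOfFin ht) := by simpa using hy
  exact h ((t.orderEmbOfFin ht).lt_iff_lt.1 hxy)

section ShuffleSign

variable {m : ℕ} {s : Finset (Fin m)}

theorem sign_eq_neg_one_pow_of_strictMonoOn {π : Perm (Fin m)} {l : ℕ}
    (hs : StrictMonoOn π s) (hsc : StrictMonoOn π ↑(sᶜ)) (hmem : ∀ x, x ∈ s ↔ l ≤ (π x : ℕ)) :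
    sign π = (-1) ^ ∑ x ∈ s, #{y ∈ Ioi x | y ∉ s} := by
  have hinv : ∀ x y, x < y → (π x < π y ↔ ¬(x ∈ s ∧ y ∉ s)) := by
    intro x y hxy
    by_cases hx : x ∈ s <;> by_cases hy : y ∈ s
    · simpa [hx, hy] using hs hx hy hxy
    · have := (hmem x).1 hx
      have := (hmem y).not.1 hy
      simp only [hx, hy, not_false_eq_true, and_self, not_true_eq_false, iff_false, not_lt,
        Fin.le_def]
      omega
    · have := (hmem x).not.1 hx
      have := (hmem y).1 hy
      simp only [hx, hy, false_and, not_false_eq_true, iff_true, Fin.lt_def]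
      omega
    · simpa [hx, hy] using hsc (by simpa using hx) (by simpa using hy) hxy
  rw [sign_eq_prod_prod_Ioi, ← prod_pow_eq_pow_sum, ← univ_inter s, ← prod_ite_mem]
  refine prod_congr rfl fun x _ => ?_
  rw [prod_congr rfl fun y hy => if_congr (hinv x y (mem_Ioi.1 hy)) rfl rfl]
  by_cases hx : x ∈ s <;> simp [hx, prod_ite]

theorem filter_Ioi_orderEmbOfFin_mem {k : ℕ} (hs : #s = k) (i : Fin k) :
    {y ∈ Ioi (s.orderEmbOfFin hs i) | y ∈ s} = (Ioi i).map (s.orderEmbOfFin hs).toEmbedding := by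
  ext y
  simp only [mem_filter, mem_Ioi, mem_map, RelEmbedding.coe_toEmbedding]
  constructor
  · rintro ⟨hy, hys⟩
    obtain ⟨j, rfl⟩ : y ∈ Set.range (s.orderEmbOfFin hs) := by simpa using hys
    exact ⟨j, (s.orderEmbOfFin hs).lt_iff_lt.1 hy, rfl⟩
  · rintro ⟨j, hj, rfl⟩
    exact ⟨(s.orderEmbOfFin hs).lt_iff_lt.2 hj, s.orderEmbOfFin_mem hs j⟩

theorem card_filter_Ioi_not_mem_orderEmbOfFin {k : ℕ} (hs : #s = k) (i : Fin k) :
    #{y ∈ Ioi (s.orderEmbOfFin hs i) | y ∉ s} + s.orderEmbOfFin hs i = #sᶜ + i := by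
  have hsplit := card_filter_add_card_filter_not (s := Ioi (s.orderEmbOfFin hs i)) (· ∈ s)
  rw [filter_Ioi_orderEmbOfFin_mem, card_map, Fin.card_Ioi, Fin.card_Ioi] at hsplit
  rw [card_compl, Fintype.card_fin, hs]
  have : k ≤ m := by simpa [hs] using card_le_univ s
  have := (s.orderEmbOfFin hs i).isLt
  omega

theorem sum_card_filter_Ioi_not_mem_add_sum :
    ∑ x ∈ s, #{y ∈ Ioi x | y ∉ s} + ∑ x ∈ s, (x : ℕ) = ∑ i ∈ range #s, (#sᶜ + i) := by
  rw [← sum_add_distrib]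
  nth_rw 1 [← s.map_orderEmbOfFin_univ rfl]
  rw [sum_map]
  simp only [RelEmbedding.coe_toEmbedding, card_filter_Ioi_not_mem_orderEmbOfFin]
  exact Fin.sum_univ_eq_sum_range (fun i => #sᶜ + i) #s

end ShuffleSign

section LaplacePerm

variable {n : ℕ} {Λ : Finset (Fin (2 * n))}

theorem card_compl_eq_of_card_eq (hΛ : #Λ = n) : #Λᶜ = n := by
  rw [card_compl, Fintype.card_fin, hΛ]
  omega

variable (n) in
def bottomTopEquiv : Fin n ⊕ Fin n ≃ Fin (2 * n) :=
  (Equiv.sumComm _ _).trans (finSumFinEquiv.trans (finCongr (by omega)))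

@[simp]
theorem bottomTopEquiv_inl (i : Fin n) : bottomTopEquiv n (.inl i) = ⟨n + i, by omega⟩ := by
  simp [bottomTopEquiv, Fin.ext_iff]
  omega

@[simp]
theorem bottomTopEquiv_inr (i : Fin n) : bottomTopEquiv n (.inr i) = ⟨i, by omega⟩ := by
  simp [bottomTopEquiv, Fin.ext_iff]

def laplacePerm (hΛ : #Λ = n) (σ τ : Perm (Fin n)) : Perm (Fin (2 * n)) :=
  ((finSumEquivOfFinset hΛ (card_compl_eq_of_card_eq hΛ)).symm.trans (σ.sumCongr τ)).trans
    (bottomTopEquiv n)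

variable (hΛ : #Λ = n) (σ τ : Perm (Fin n))

theorem laplacePerm_orderEmbOfFin (i : Fin n) :
    laplacePerm hΛ σ τ (Λ.orderEmbOfFin hΛ i) = ⟨n + σ i, by omega⟩ := by
  rw [← finSumEquivOfFinset_inl hΛ (card_compl_eq_of_card_eq hΛ), laplacePerm, trans_apply,
    trans_apply, symm_apply_apply]
  simp

theorem laplacePerm_orderEmbOfFin_compl (i : Fin n) :
    laplacePerm hΛ σ τ (Λᶜ.orderEmbOfFin (card_compl_eq_of_card_eq hΛ) i) = ⟨τ i, by omega⟩ := by
  rw [← finSumEquivOfFinset_inr hΛ, laplacePerm, trans_apply, trans_apply, symm_apply_apply]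
  simp

theorem mem_iff_le_laplacePerm (j : Fin (2 * n)) : j ∈ Λ ↔ n ≤ (laplacePerm hΛ σ τ j : ℕ) := by
  by_cases hj : j ∈ Λ
  · obtain ⟨i, rfl⟩ : j ∈ Set.range (Λ.orderEmbOfFin hΛ) := by simpa using hj
    simp [laplacePerm_orderEmbOfFin]
  · obtain ⟨i, rfl⟩ : j ∈ Set.range (Λᶜ.orderEmbOfFin (card_compl_eq_of_card_eq hΛ)) := by
      simpa using hj
    simp [hj, laplacePerm_orderEmbOfFin_compl]

theorem sign_laplacePerm_one_one :
    sign (laplacePerm hΛ 1 1) = (-1) ^ ((∑ l ∈ Λ, (l.val + 1)) + n * (3 * n + 1) / 2) := by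
  rw [sign_eq_neg_one_pow_of_strictMonoOn
    (strictMonoOn_of_strictMono_comp_orderEmbOfFin hΛ fun i j hij => by
      rw [Function.comp_apply, Function.comp_apply, laplacePerm_orderEmbOfFin,
        laplacePerm_orderEmbOfFin, Fin.mk_lt_mk, one_apply, one_apply]
      omega)
    (strictMonoOn_of_strictMono_comp_orderEmbOfFin _ fun i j hij => by
      rw [Function.comp_apply, Function.comp_apply, laplacePerm_orderEmbOfFin_compl,
        laplacePerm_orderEmbOfFin_compl, Fin.mk_lt_mk, one_apply, one_apply]
      omega)
    (mem_iff_le_laplacePerm hΛ 1 1)]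
  -- `n * (3 * n + 1) / 2 = n * n + n * (n + 1) / 2`: the exponents differ by an even number
  refine neg_one_pow_congr (Nat.even_add.1 ?_)
  have hcount := sum_card_filter_Ioi_not_mem_add_sum (s := Λ)
  rw [card_compl_eq_of_card_eq hΛ, hΛ, sum_add_distrib, sum_const, card_range,
    smul_eq_mul] at hcount
  have htri := sum_range_id_mul_two n
  have hsucc : ∑ l ∈ Λ, (l.val + 1) = ∑ l ∈ Λ, l.val + n := by
    rw [sum_add_distrib, sum_const, hΛ, smul_eq_mul, mul_one]
  have h1 : n * (n - 1) + n = n * n := by cases n <;> simp [Nat.mul_succ]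
  have h2 : n * (3 * n + 1) = 3 * (n * n) + n := by ring
  rw [hsucc, h2, Nat.even_iff]
  omega

theorem sign_laplacePerm :
    sign (laplacePerm hΛ σ τ)
      = (-1) ^ ((∑ l ∈ Λ, (l.val + 1)) + n * (3 * n + 1) / 2) * (sign σ * sign τ) := by
  have hconj : laplacePerm hΛ σ τ = laplacePerm hΛ 1 1 *
      ((finSumEquivOfFinset hΛ (card_compl_eq_of_card_eq hΛ)).symm.trans (σ.sumCongr τ)).trans
        (finSumEquivOfFinset hΛ (card_compl_eq_of_card_eq hΛ)) := by
    ext j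
    simp [laplacePerm]
  rw [hconj, Perm.sign_mul, sign_laplacePerm_one_one, sign_symm_trans_trans, sign_sumCongr]

theorem prod_laplacePerm {R : Type*} [CommMonoid R] (M : Matrix (Fin (2 * n)) (Fin (2 * n)) R) :
    ∏ j, M (laplacePerm hΛ σ τ j) j
      = (∏ i, M ⟨n + σ i, by omega⟩ (Λ.orderEmbOfFin hΛ i))
        * ∏ i, M ⟨τ i, by omega⟩ (Λᶜ.orderEmbOfFin (card_compl_eq_of_card_eq hΛ) i) := by
  rw [← (finSumEquivOfFinset hΛ (card_compl_eq_of_card_eq hΛ)).prod_comp, Fintype.prod_sum_type]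
  simp only [finSumEquivOfFinset_inl, finSumEquivOfFinset_inr, laplacePerm_orderEmbOfFin,
    laplacePerm_orderEmbOfFin_compl]

end LaplacePerm

variable (n) in
theorem laplacePerm_bijective :
    Function.Bijective fun x : {Λ : Finset (Fin (2 * n)) // #Λ = n} × Perm (Fin n) × Perm (Fin n) =>
      laplacePerm x.1.2 x.2.1 x.2.2 := by
  refine (Fintype.bijective_iff_injective_and_card _).2 ⟨?_, ?_⟩
  · rintro ⟨⟨Λ₁, h₁⟩, σ₁, τ₁⟩ ⟨⟨Λ₂, h₂⟩, σ₂, τ₂⟩ h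
    dsimp only at h
    obtain rfl : Λ₁ = Λ₂ := by
      ext j
      rw [mem_iff_le_laplacePerm h₁ σ₁ τ₁, mem_iff_le_laplacePerm h₂ σ₂ τ₂, h]
    have hσ : σ₁ = σ₂ := by
      ext i
      simpa [laplacePerm_orderEmbOfFin] using DFunLike.congr_fun h (Λ₁.orderEmbOfFin h₁ i)
    have hτ : τ₁ = τ₂ := by
      ext i
      simpa [laplacePerm_orderEmbOfFin_compl] using
        DFunLike.congr_fun h (Λ₁ᶜ.orderEmbOfFin (card_compl_eq_of_card_eq h₁) i)
    rw [hσ, hτ]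
  · simp only [Fintype.card_prod, Fintype.card_perm, Fintype.card_fin,
      Fintype.card_finset_len]
    rw [← mul_assoc, ← Nat.choose_mul_factorial_mul_factorial (by omega : n ≤ 2 * n),
      show 2 * n - n = n by omega]

theorem neg_one_pow_mul_blockMinor_mul_blockMinor {R : Type*} [CommRing R] {n : ℕ}
    (M : Matrix (Fin (2 * n)) (Fin (2 * n)) R) {Λ : Finset (Fin (2 * n))} (hΛ : #Λ = n) :
    (-1 : R) ^ ((∑ l ∈ Λ, (l.val + 1)) + n * (3 * n + 1) / 2)
        * blockMinor M (fun i => ⟨n + i.val, by omega⟩) Λ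
        * blockMinor M (fun i => ⟨i.val, by omega⟩) Λᶜ
      = ∑ σ, ∑ τ, (sign (laplacePerm hΛ σ τ) : R) * ∏ j, M (laplacePerm hΛ σ τ j) j := by
  rw [blockMinor, blockMinor, dif_pos hΛ, dif_pos (card_compl_eq_of_card_eq hΛ),
    Matrix.det_apply', Matrix.det_apply', mul_assoc, sum_mul_sum, mul_sum]
  refine sum_congr rfl fun σ _ => ?_
  rw [mul_sum]
  refine sum_congr rfl fun τ _ => ?_
  rw [sign_laplacePerm, prod_laplacePerm]
  push_cast
  simp only [Matrix.submatrix_apply]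
  ring

/-- Generalized Laplace expansion: for a `2n × 2n` matrix `M` over a commutative ring,
`det M = Σ_{Λ ⊆ [2n], |Λ| = n} (−1)^{Σ_{λ∈Λ} λ + n(3n+1)/2} · det(M_{bottom,Λ}) · det(M_{top,Λᶜ})`,
where the bottom block consists of rows `n+1,…,2n`, the top block of rows `1,…,n`
(1-based), and the elements `λ ∈ Λ` are counted 1-based (here `λ.val + 1`). -/
theorem stmt14 {R : Type*} [CommRing R] (n : ℕ)
    (M : Matrix (Fin (2 * n)) (Fin (2 * n)) R) :
    M.det = ∑ Λ ∈ (Finset.univ : Finset (Fin (2 * n))).powersetCard n,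
      (-1 : R) ^ ((∑ l ∈ Λ, (l.val + 1)) + n * (3 * n + 1) / 2)
        * blockMinor M (fun i => ⟨n + i.val, by have := i.2; omega⟩) Λ
        * blockMinor M (fun i => ⟨i.val, by have := i.2; omega⟩) Λᶜ := by
  rw [Matrix.det_apply', ← (laplacePerm_bijective n).sum_comp, Fintype.sum_prod_type,
    sum_subtype _ fun Λ => mem_powersetCard_univ]
  refine sum_congr rfl fun Λ _ => ?_
  rw [neg_one_pow_mul_blockMinor_mul_blockMinor M Λ.2, Fintype.sum_prod_type]
end

section
/- In the case n = 3, the cubic polynomial f_LAP = T_{123}T_{345}^2 − T_{124}T_{245}T_{345} + T_{125}T_{145}T_{345} + 2T_{125}T_{235}T_{345} − T_{125}T_{245}^2 + T_{134}T_{145}T_{345} − T_{135}^2T_{345} − T_{135}T_{234}T_{345} + T_{135}T_{235}T_{245} − T_{145}T_{234}T_{245} − T_{234}^2T_{345} + 2T_{234}T_{235}T_{245} − T_{235}^3 vanishes when each variable T_{ijk} is substituted by the 3×3 minor on columns i,j,k of the 3×5 matrix with entries M_{p,q} = x_{p+q−1} if p+q−1 ≤ 5 and 0 otherwise. -/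
open MvPolynomial

noncomputable def hankelM3 (K : Type*) [Field K] :
    Matrix (Fin 3) (Fin 5) (MvPolynomial (Fin 6) K) :=
  fun i j => if h : i.val + j.val < 6 then X (⟨i.val + j.val, h⟩ : Fin 6) else 0

noncomputable def tMinor3 (K : Type*) [Field K] (a b c : Fin 5) :
    MvPolynomial (Fin 6) K :=
  ((hankelM3 K).submatrix id ![a, b, c]).det

section

variable {R : Type*} [CommRing R]

/-- The paper's `f_LAP`, with `T a b c` standing for `T_{a+1,b+1,c+1}`. -/
def fLAP (T : Fin 5 → Fin 5 → Fin 5 → R) : R :=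
  T 0 1 2 * T 2 3 4 ^ 2
    - T 0 1 3 * T 1 3 4 * T 2 3 4
    + T 0 1 4 * T 0 3 4 * T 2 3 4
    + 2 * T 0 1 4 * T 1 2 4 * T 2 3 4
    - T 0 1 4 * T 1 3 4 ^ 2
    + T 0 2 3 * T 0 3 4 * T 2 3 4
    - T 0 2 4 ^ 2 * T 2 3 4
    - T 0 2 4 * T 1 2 3 * T 2 3 4
    + T 0 2 4 * T 1 2 4 * T 1 3 4
    - T 0 3 4 * T 1 2 3 * T 1 3 4
    - T 1 2 3 ^ 2 * T 2 3 4
    + 2 * T 1 2 3 * T 1 2 4 * T 1 3 4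
    - T 1 2 4 ^ 3

def columnMinor {n : Type*} (A : Matrix (Fin 3) n R) (a b c : n) : R :=
  (A.submatrix id ![a, b, c]).det

def degenerateHankel (x : Fin 6 → R) : Matrix (Fin 3) (Fin 5) R :=
  fun i j => if h : i.val + j.val < 6 then x ⟨i.val + j.val, h⟩ else 0

theorem degenerateHankel_eq (x : Fin 6 → R) :
    degenerateHankel x =
      !![x 0, x 1, x 2, x 3, x 4; x 1, x 2, x 3, x 4, x 5; x 2, x 3, x 4, x 5, 0] := by
  ext i j
  fin_cases i <;> fin_cases j <;> rfl

theorem fLAP_columnMinor_degenerateHankel (x : Fin 6 → R) :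
    fLAP (columnMinor (degenerateHankel x)) = 0 := by
  simp only [fLAP, columnMinor, degenerateHankel_eq, Matrix.det_fin_three, Matrix.submatrix_apply,
    id_eq, Matrix.of_apply, Matrix.cons_val', Matrix.cons_val_fin_one, Matrix.cons_val_zero,
    Matrix.cons_val_one, Matrix.cons_val]
  ring

end

/-- For `n = 3`, the cubic polynomial `f_LAP` vanishes when each variable `T_{ijk}`
is substituted by the `3 × 3` minor on columns `i,j,k` of the degenerate Hankel
matrix `H[1]` (columns are `1`-based in the paper; here `0`-based). -/
theorem stmt15 (K : Type*) [Field K] :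
    tMinor3 K 0 1 2 * tMinor3 K 2 3 4 ^ 2
      - tMinor3 K 0 1 3 * tMinor3 K 1 3 4 * tMinor3 K 2 3 4
      + tMinor3 K 0 1 4 * tMinor3 K 0 3 4 * tMinor3 K 2 3 4
      + 2 * tMinor3 K 0 1 4 * tMinor3 K 1 2 4 * tMinor3 K 2 3 4
      - tMinor3 K 0 1 4 * tMinor3 K 1 3 4 ^ 2
      + tMinor3 K 0 2 3 * tMinor3 K 0 3 4 * tMinor3 K 2 3 4
      - tMinor3 K 0 2 4 ^ 2 * tMinor3 K 2 3 4
      - tMinor3 K 0 2 4 * tMinor3 K 1 2 3 * tMinor3 K 2 3 4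
      + tMinor3 K 0 2 4 * tMinor3 K 1 2 4 * tMinor3 K 1 3 4
      - tMinor3 K 0 3 4 * tMinor3 K 1 2 3 * tMinor3 K 1 3 4
      - tMinor3 K 1 2 3 ^ 2 * tMinor3 K 2 3 4
      + 2 * tMinor3 K 1 2 3 * tMinor3 K 1 2 4 * tMinor3 K 1 3 4
      - tMinor3 K 1 2 4 ^ 3 = 0 :=
  fLAP_columnMinor_degenerateHankel (X : Fin 6 → MvPolynomial (Fin 6) K)
end

section
/- The n²×n² staircase block matrix L[1] built from the columns C_1,…,C_{n+2} of the degenerate Hankel matrix H[1] (first block (C_1,…,C_{n+2},0,…), overlapping shifted blocks (C_1,…,C_{n+1}) over (C_2,…,C_{n+2}) thereafter) has determinant zero; indeed the row R_{n²−n+1} equals the alternating sum Σ_{j=2}^{n} (−1)^{j} R_{n²−jn+j}, i.e. Σ_{j=1}^{n}(−1)^{j+1} R_{n²−jn+j} = 0 as a row vector. -/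
/-!
Row `rowIdx n j` of `L[1]` is row `j` of row block `n - 1 - j`, while column `c` is supported
on the two row blocks `b, b + 1` of its vertical block, where it carries column `o` of `H[1]`
over column `o + 1`. So in column `c` only the rows with `j = n - 1 - b` and `j = n - 2 - b` are
nonzero, and by the Hankel property both entries equal `X (n - 1 - b + o)`; the alternating
signs cancel them. A nontrivial vanishing combination of rows over the domain `K[x]` forces
the determinant to vanish.
-/

open MvPolynomial

/-- The degenerate Hankel matrix `H[1]`: the `n × (n+2)` matrix over
`K[x_1,…,x_{2n}]` with `(i,j)` entry (1-based) `x_{i+j−1}` if `i+j−1 ≤ 2n` and `0`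
otherwise; in 0-based indexing the entry is `X (i+j)` when `i+j < 2n`. -/
noncomputable def hankelH1 (K : Type*) [Field K] (n : ℕ) :
    Matrix (Fin n) (Fin (n + 2)) (MvPolynomial (Fin (2 * n)) K) :=
  fun i j => if h : i.val + j.val < 2 * n then X (⟨i.val + j.val, h⟩ : Fin (2 * n)) else 0

/-- The `n² × n²` staircase block matrix `L[1]` (Equation (4.1)): rows come in `n`
blocks of `n` rows; the columns come in `n−1` vertical blocks, the first of width
`n+2` carrying `(C_1,…,C_{n+2})` over `(C_2,…,C_{n+2},0)` in row blocks `1, 2`,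
and each subsequent block of width `n+1` carrying `(C_1,…,C_{n+1})` over
`(C_2,…,C_{n+2})` in row blocks `v, v+1`; all other entries are zero.  Here `C_i`
denotes the `i`-th column of `hankelH1`. -/
noncomputable def LOne (K : Type*) [Field K] (n : ℕ) (hn : 2 ≤ n) :
    Matrix (Fin (n * n)) (Fin (n * n)) (MvPolynomial (Fin (2 * n)) K) :=
  fun r c =>
    let rb := r.val / n
    let ri : Fin n := ⟨r.val % n, Nat.mod_lt _ (by omega)⟩
    if hc : c.val < n + 2 then
      if rb = 0 then hankelH1 K n ri ⟨c.val, hc⟩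
      else if rb = 1 then
        (if hcb : c.val ≤ n then hankelH1 K n ri ⟨c.val + 1, by omega⟩ else 0)
      else 0
    else
      let b := (c.val - (n + 2)) / (n + 1) + 1
      let cb : ℕ := (c.val - (n + 2)) % (n + 1)
      have hcb : cb < n + 1 := Nat.mod_lt _ (by omega)
      if rb = b then hankelH1 K n ri ⟨cb, by omega⟩
      else if rb = b + 1 then hankelH1 K n ri ⟨cb + 1, by omega⟩
      else 0

/-- The row of `L[1]` with 1-based index `n² − jn + j` for `j = j'+1`, `j' : Fin n`;
its 0-based index is `(n − 1 − j')·n + j'`. -/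
def rowIdx (n : ℕ) (j : Fin n) : Fin (n * n) :=
  ⟨(n - 1 - j.val) * n + j.val, by
    have hj := j.isLt
    have h1 : (n - 1 - j.val) * n ≤ (n - 1) * n :=
      Nat.mul_le_mul_right _ (by omega)
    have h2 : (n - 1) * n + n = n * n := by
      obtain ⟨m, rfl⟩ : ∃ m, n = m + 1 := ⟨n - 1, by omega⟩
      have hm : m + 1 - 1 = m := rfl
      rw [hm]; ring
    omega⟩

namespace Matrix

theorem det_eq_zero_of_sum_smul_row_eq_zero {ι m R : Type*} [Fintype ι] [Fintype m]
    [DecidableEq m] [CommRing R] [IsDomain R] (A : Matrix m m R) {e : ι → m}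
    (he : Function.Injective e) {w : ι → R} (hw : w ≠ 0) (h : ∑ i, w i • A (e i) = 0) :
    A.det = 0 := by
  refine exists_vecMul_eq_zero_iff.mp ⟨∑ i, Pi.single (e i) (w i), ?_, ?_⟩
  · obtain ⟨i, hi⟩ := Function.ne_iff.mp hw
    refine Function.ne_iff.mpr ⟨e i, ?_⟩
    rwa [Finset.sum_apply, Finset.sum_eq_single i
      (fun j _ hj => Pi.single_eq_of_ne (he.ne hj.symm) _) (by simp), Pi.single_eq_same]
  · simp only [sum_vecMul, single_vecMul]
    exact h

end Matrix

theorem sum_neg_one_pow_mul_eq_zero_of_adjacent {R : Type*} [CommRing R] {n k : ℕ}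
    (hk : k + 1 < n) (f : Fin n → R) (hf : ∀ j : Fin n, j.val ≠ k → j.val ≠ k + 1 → f j = 0)
    (heq : f ⟨k, by omega⟩ = f ⟨k + 1, hk⟩) :
    ∑ j : Fin n, (-1) ^ j.val * f j = 0 := by
  rw [Fintype.sum_eq_add ⟨k, by omega⟩ ⟨k + 1, hk⟩ (by simp [Fin.ext_iff])
    fun j hj => by rw [hf j (Fin.val_ne_of_ne hj.1) (Fin.val_ne_of_ne hj.2), mul_zero], heq,
    pow_succ]
  ring

noncomputable def hankelEntry (R : Type*) [CommSemiring R] (n k : ℕ) :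
    MvPolynomial (Fin (2 * n)) R :=
  if h : k < 2 * n then X ⟨k, h⟩ else 0

lemma hankelEntry_of_le {R : Type*} [CommSemiring R] {n k : ℕ} (hk : 2 * n ≤ k) :
    hankelEntry R n k = 0 :=
  dif_neg (by omega)

lemma hankelH1_apply (K : Type*) [Field K] (n : ℕ) (i : Fin n) (j : Fin (n + 2)) :
    hankelH1 K n i j = hankelEntry K n (i + j) :=
  rfl

def colBlock (n c : ℕ) : ℕ := if c < n + 2 then 0 else (c - (n + 2)) / (n + 1) + 1

def colOffset (n c : ℕ) : ℕ := if c < n + 2 then c else (c - (n + 2)) % (n + 1)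

lemma colOffset_lt (n c : ℕ) : colOffset n c < n + 2 := by
  have := Nat.mod_lt (c - (n + 2)) n.add_one_pos
  unfold colOffset
  split_ifs <;> omega

lemma colBlock_eq_zero_of_colOffset_eq {n c : ℕ} (h : colOffset n c = n + 1) :
    colBlock n c = 0 := by
  have := Nat.mod_lt (c - (n + 2)) n.add_one_pos
  unfold colOffset at h
  unfold colBlock
  split_ifs at h ⊢ <;> omega

lemma colBlock_le {n c : ℕ} (hn : 2 ≤ n) (hc : c < n * n) : colBlock n c ≤ n - 2 := by
  unfold colBlock
  split_ifs
  · omega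
  · have hsq : (n + 1) * (n - 2) + (n + 2) = n * n := by
      obtain ⟨m, rfl⟩ : ∃ m, n = m + 2 := ⟨n - 2, by omega⟩
      simp only [Nat.add_sub_cancel]
      ring
    have := Nat.div_lt_of_lt_mul (show c - (n + 2) < (n + 1) * (n - 2) by omega)
    omega

lemma LOne_apply (K : Type*) [Field K] (n : ℕ) (hn : 2 ≤ n) (r c : Fin (n * n)) :
    LOne K n hn r c =
      if (r : ℕ) / n = colBlock n c then hankelEntry K n (r % n + colOffset n c)
      else if (r : ℕ) / n = colBlock n c + 1 ∧ colOffset n c + 1 < n + 2 then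
        hankelEntry K n (r % n + colOffset n c + 1)
      else 0 := by
  unfold LOne colBlock colOffset
  simp only [hankelH1_apply]
  have := Nat.mod_lt (c - (n + 2)) n.add_one_pos
  split_ifs <;> first | rfl | omega

lemma rowIdx_div (n : ℕ) (j : Fin n) : (rowIdx n j : ℕ) / n = n - 1 - j := by
  change ((n - 1 - j) * n + j) / n = _
  rw [mul_comm, Nat.mul_add_div j.pos, Nat.div_eq_of_lt j.isLt, add_zero]

lemma rowIdx_mod (n : ℕ) (j : Fin n) : (rowIdx n j : ℕ) % n = j := by
  change ((n - 1 - j) * n + j) % n = _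
  rw [mul_comm, Nat.mul_add_mod, Nat.mod_eq_of_lt j.isLt]

lemma rowIdx_injective (n : ℕ) : Function.Injective (rowIdx n) := fun i j h =>
  Fin.ext <| by rw [← rowIdx_mod n i, ← rowIdx_mod n j, h]

lemma sum_neg_one_pow_mul_LOne_rowIdx (K : Type*) [Field K] (n : ℕ) (hn : 2 ≤ n)
    (c : Fin (n * n)) :
    ∑ j : Fin n, (-1 : MvPolynomial (Fin (2 * n)) K) ^ j.val * LOne K n hn (rowIdx n j) c =
      0 := by
  have hb := colBlock_le hn c.isLt
  have ho := colOffset_lt n c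
  refine sum_neg_one_pow_mul_eq_zero_of_adjacent (k := n - 2 - colBlock n c) (by omega) _
    (fun j hj hj' => ?_) ?_
  · have := j.isLt
    rw [LOne_apply, rowIdx_div, if_neg (by omega), if_neg (by omega)]
  · simp only [LOne_apply, rowIdx_div, rowIdx_mod]
    rw [if_neg (by omega),
      if_pos (show n - 1 - (n - 2 - colBlock n c + 1) = colBlock n c by omega)]
    by_cases ho' : colOffset n c + 1 < n + 2
    · rw [if_pos ⟨by omega, ho'⟩]
      congr 1
      omega
    · -- last column of the first block: the lower entry is cut off, the upper one is 0 too
      have := colBlock_eq_zero_of_colOffset_eq (show colOffset n c = n + 1 by omega)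
      rw [if_neg (fun h => ho' h.2), hankelEntry_of_le (by omega)]

/-- The staircase matrix `L[1]` has determinant zero; indeed the alternating sum of
rows `Σ_{j=1}^{n} (−1)^{j+1} R_{n²−jn+j}` vanishes identically. -/
theorem stmt17 (K : Type*) [Field K] (n : ℕ) (hn : 2 ≤ n) :
    (LOne K n hn).det = 0
    ∧ ∀ c : Fin (n * n),
        ∑ j : Fin n, (-1 : MvPolynomial (Fin (2 * n)) K) ^ j.val
          * LOne K n hn (rowIdx n j) c = 0 := by
  have hrows := sum_neg_one_pow_mul_LOne_rowIdx K n hn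
  refine ⟨(LOne K n hn).det_eq_zero_of_sum_smul_row_eq_zero (rowIdx_injective n)
    (w := fun j => (-1) ^ j.val) (Function.ne_iff.mpr ⟨⟨0, by omega⟩, by simp⟩) ?_, hrows⟩
  funext c
  simpa using hrows c
end
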